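/- Suppose |u⁺| = c_s(ρ⁺), where ρ⁺ = (V⁺)². Then g(V⁺) = 0 and g'(V⁺) = 0, V⁺ is the unique zero of g on (0,∞), and g(V) > 0 for every V ∈ (0,∞) with V ≠ V⁺. -/

import Mathlib

/-!
With `ρ = V²` and the Bernoulli function `B(ρ) = C₁² / (2ρ²) + h(ρ)` of the mass flux `C₁`,
the choice of `C₂` makes `g(V) = (B(V²) - B(ρ⁺)) · V`. Since `B'(ρ) = γ ρ^(γ-2) - C₁² / ρ³`,
the sonic condition, which reads `C₁² = γ (ρ⁺)^(γ+1)`, gives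
`B'(ρ) = γ (ρ^(γ+1) - (ρ⁺)^(γ+1)) / ρ³`. This changes sign from negative to positive at `ρ⁺`,
so `B` has a strict global minimum on `(0, ∞)` at `ρ⁺`, where its derivative vanishes.
-/

open Real

/-- Enthalpy: `h(ρ) = ln ρ` if `γ = 1`, `h(ρ) = (γ/(γ-1)) ρ^(γ-1)` if `γ > 1`. -/
noncomputable def enth (γ ρ : ℝ) : ℝ :=
  if γ = 1 then Real.log ρ else (γ / (γ - 1)) * ρ ^ (γ - 1)

theorem lt_of_hasDerivAt_neg_of_pos {f f' : ℝ → ℝ} {a b x : ℝ} (hb : a < b) (hx : a < x)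
    (hxb : x ≠ b) (hf : ∀ y, a < y → HasDerivAt f (f' y) y)
    (hneg : ∀ y, a < y → y < b → f' y < 0) (hpos : ∀ y, b < y → 0 < f' y) :
    f b < f x := by
  have hcont : ContinuousOn f (Set.Ioi a) := fun y hy =>
    (hf y hy).continuousAt.continuousWithinAt
  rcases hxb.lt_or_gt with hxb | hbx
  · have hanti : StrictAntiOn f (Set.Ioc a b) :=
      strictAntiOn_of_hasDerivWithinAt_neg (convex_Ioc a b) (hcont.mono Set.Ioc_subset_Ioi_self)
        (fun y hy => (hf y (by rw [interior_Ioc] at hy; exact hy.1)).hasDerivWithinAt)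
        (fun y hy => by rw [interior_Ioc] at hy; exact hneg y hy.1 hy.2)
    exact hanti ⟨hx, hxb.le⟩ ⟨hb, le_rfl⟩ hxb
  · have hmono : StrictMonoOn f (Set.Ici b) :=
      strictMonoOn_of_hasDerivWithinAt_pos (convex_Ici b)
        (hcont.mono fun y hy => hb.trans_le hy)
        (fun y hy => (hf y (by rw [interior_Ici] at hy; exact hb.trans hy)).hasDerivWithinAt)
        (fun y hy => by rw [interior_Ici] at hy; exact hpos y hy)
    exact hmono (Set.mem_Ici.2 le_rfl) hbx.le hbx

theorem hasDerivAt_enth (γ : ℝ) {ρ : ℝ} (hρ : 0 < ρ) :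
    HasDerivAt (enth γ) (γ * ρ ^ (γ - 2)) ρ := by
  by_cases hγ : γ = 1
  · subst hγ
    have hlog : enth 1 = Real.log := funext fun x => by simp [enth]
    rw [hlog, show (1 : ℝ) - 2 = -1 by norm_num, Real.rpow_neg_one, one_mul]
    exact Real.hasDerivAt_log hρ.ne'
  · have hγ1 : γ - 1 ≠ 0 := sub_ne_zero.mpr hγ
    have hfun : enth γ = fun x => γ / (γ - 1) * x ^ (γ - 1) := funext fun x => by simp [enth, hγ]
    rw [hfun]
    refine ((Real.hasDerivAt_rpow_const (Or.inl hρ.ne')).const_mul (γ / (γ - 1))).congr_deriv ?_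
    rw [show γ - 1 - 1 = γ - 2 by ring]
    field_simp

/-- The Bernoulli function `u²/2 + h(ρ)` of a flow with mass flux `m = ρ u`. -/
noncomputable def bernoulliFunction (γ m ρ : ℝ) : ℝ :=
  m ^ 2 / (2 * ρ ^ 2) + enth γ ρ

theorem hasDerivAt_bernoulliFunction (γ m : ℝ) {ρ : ℝ} (hρ : 0 < ρ) :
    HasDerivAt (bernoulliFunction γ m) (γ * ρ ^ (γ - 2) - m ^ 2 / ρ ^ 3) ρ := by
  have hkin : HasDerivAt (fun x : ℝ => m ^ 2 / (2 * x ^ 2)) (-(m ^ 2 / ρ ^ 3)) ρ := by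
    refine ((hasDerivAt_const ρ (m ^ 2)).div ((hasDerivAt_pow 2 ρ).const_mul 2)
      (by positivity)).congr_deriv ?_
    field_simp
    ring
  exact (hkin.add (hasDerivAt_enth γ hρ)).congr_deriv (by ring)

section Sonic

variable {γ m ρs : ℝ}

theorem hasDerivAt_bernoulliFunction_of_sonic (hm : m ^ 2 = γ * ρs ^ (γ + 1)) {ρ : ℝ}
    (hρ : 0 < ρ) :
    HasDerivAt (bernoulliFunction γ m) (γ / ρ ^ 3 * (ρ ^ (γ + 1) - ρs ^ (γ + 1))) ρ := by
  refine (hasDerivAt_bernoulliFunction γ m hρ).congr_deriv ?_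
  have hsplit : ρ ^ (γ + 1) = ρ ^ (γ - 2) * ρ ^ 3 := by
    rw [← Real.rpow_add_natCast hρ.ne']
    congr 1
    push_cast
    ring
  rw [hm, hsplit]
  field_simp

theorem hasDerivAt_bernoulliFunction_sonic_zero (hm : m ^ 2 = γ * ρs ^ (γ + 1)) (hs : 0 < ρs) :
    HasDerivAt (bernoulliFunction γ m) 0 ρs := by
  simpa using hasDerivAt_bernoulliFunction_of_sonic hm hs

theorem bernoulliFunction_sonic_lt (hγ : 0 < γ) (hm : m ^ 2 = γ * ρs ^ (γ + 1)) (hs : 0 < ρs)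
    {ρ : ℝ} (hρ : 0 < ρ) (hne : ρ ≠ ρs) :
    bernoulliFunction γ m ρs < bernoulliFunction γ m ρ := by
  refine lt_of_hasDerivAt_neg_of_pos hs hρ hne
    (fun x hx => hasDerivAt_bernoulliFunction_of_sonic hm hx) (fun x hx hxs => ?_) fun x hsx => ?_
  · have : x ^ (γ + 1) < ρs ^ (γ + 1) := Real.rpow_lt_rpow hx.le hxs (by linarith)
    exact mul_neg_of_pos_of_neg (by positivity) (by linarith)
  · have hx : 0 < x := hs.trans hsx
    have : ρs ^ (γ + 1) < x ^ (γ + 1) := Real.rpow_lt_rpow hs.le hsx (by linarith)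
    exact mul_pos (by positivity) (by linarith)

end Sonic

theorem sonic_structure_nonlinear_viscosity_general
    (γ Vp up : ℝ) (hγ : 1 ≤ γ) (hVp : 0 < Vp)
    (C₁ C₂ : ℝ) (hC₁ : C₁ = -up * Vp ^ 2)
    (hC₂ : C₂ = -up ^ 2 / 2 - enth γ (Vp ^ 2))
    (g : ℝ → ℝ)
    (hg : ∀ V : ℝ, 0 < V → g V = (C₁ ^ 2 / (2 * V ^ 4) + enth γ (V ^ 2) + C₂) * V)
    (hu : |up| = Real.sqrt (γ * (Vp ^ 2) ^ (γ - 1))) :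
    g Vp = 0 ∧ deriv g Vp = 0 ∧
    (∀ V : ℝ, 0 < V → g V = 0 → V = Vp) ∧
    (∀ V : ℝ, 0 < V → V ≠ Vp → 0 < g V) := by
  set B := bernoulliFunction γ C₁
  have hgB : ∀ V, 0 < V → g V = (B (V ^ 2) - B (Vp ^ 2)) * V := fun V hV => by
    rw [hg V hV, hC₂]
    simp only [B, bernoulliFunction]
    rw [hC₁]
    field_simp
    ring
  have hsonic : C₁ ^ 2 = γ * (Vp ^ 2) ^ (γ + 1) := by
    have hup : up ^ 2 = γ * (Vp ^ 2) ^ (γ - 1) := by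
      rw [← sq_abs, hu, sq_sqrt (by positivity)]
    rw [show γ + 1 = γ - 1 + (2 : ℕ) by push_cast; ring,
      Real.rpow_add_natCast (by positivity), hC₁, neg_mul, neg_sq, mul_pow, hup]
    ring
  have hpos : ∀ V, 0 < V → V ≠ Vp → 0 < g V := fun V hV hne => by
    have hsq : V ^ 2 ≠ Vp ^ 2 := fun h => hne ((pow_left_inj₀ hV.le hVp.le two_ne_zero).1 h)
    rw [hgB V hV]
    exact mul_pos (sub_pos.2 (bernoulliFunction_sonic_lt (by linarith) hsonic (by positivity)
      (by positivity) hsq)) hV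
  have hB : HasDerivAt (fun V => B (V ^ 2)) 0 Vp :=
    ((hasDerivAt_bernoulliFunction_sonic_zero hsonic (by positivity)).comp (h := fun V => V ^ 2)
      Vp (hasDerivAt_pow 2 Vp)).congr_deriv (zero_mul _)
  have hg' : HasDerivAt g 0 Vp :=
    ((hB.sub_const _).mul (hasDerivAt_id' Vp)).congr_deriv (by simp) |>.congr_of_eventuallyEq
      (Filter.eventually_of_mem (Ioi_mem_nhds hVp) hgB)
  exact ⟨by rw [hgB Vp hVp, sub_self, zero_mul], hg'.deriv,
    fun V hV h0 => by_contra fun hne => (hpos V hV hne).ne' h0, hpos⟩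

/-- In the sonic regime `|u⁺| = c_s(ρ⁺)` one has `g(V⁺) = 0`, `g'(V⁺) = 0`, `V⁺` is the
unique positive zero of `g`, and `g > 0` elsewhere on `(0,∞)`. -/
theorem sonic_structure_nonlinear_viscosity
    (γ k Vp up : ℝ) (hγ : 1 ≤ γ) (hk : 0 < k) (hVp : 0 < Vp)
    (C₁ C₂ : ℝ) (hC₁ : C₁ = -up * Vp ^ 2)
    (hC₂ : C₂ = -up ^ 2 / 2 - enth γ (Vp ^ 2))
    (g : ℝ → ℝ)
    (hg : ∀ V : ℝ, 0 < V → g V = (C₁ ^ 2 / (2 * V ^ 4) + enth γ (V ^ 2) + C₂) * V)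
    (hu : |up| = Real.sqrt (γ * (Vp ^ 2) ^ (γ - 1))) :
    g Vp = 0 ∧ deriv g Vp = 0 ∧
    (∀ V : ℝ, 0 < V → g V = 0 → V = Vp) ∧
    (∀ V : ℝ, 0 < V → V ≠ Vp → 0 < g V) :=
  sonic_structure_nonlinear_viscosity_general γ Vp up hγ hVp C₁ C₂ hC₁ hC₂ g hg hu
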